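/- arXiv:1309.0479 — 4 statements merged into one kernel-verified Lean document; each statement's English description precedes it below -/
import Mathlib

section
/- If a is any positive integer, then for every positive integer n with n > 14.4a (equivalently 5n > 72a) there exists a pair of prime numbers p and q such that n < a·p < 3n/2 < a·q < 2n (equivalently, 2n < 2ap < 3n < 2aq < 4n). -/
/-!
Everything reduces to a prime in `(m, 4m/3)` for every `m ≥ 14`, applied to `m = ⌊n/a⌋` and
`m = ⌊3n/(2a)⌋`. This is Chebyshev's method. The integer
`Q(M) = (30M)! M! / ((15M)! (10M)! (6M)!)` has `p`-adic valuation `∑ᵢ d(⌊30M/pⁱ⌋)` with digits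
`d(k) = k + ⌊k/30⌋ - ⌊k/2⌋ - ⌊k/3⌋ - ⌊k/5⌋ ∈ {0, 1}`, and `d(k) = 1` for `1 ≤ k < 6`. Hence
`Q(M)` divides `lcm(1, …, 30M)` and is divisible by every prime in `(5M, 30M]`, so
`θ(30M) - θ(5M) ≤ log Q(M) ≤ ψ(30M)`, while Stirling gives
`log Q(M) = κ M + O(log M)` with `κ = 30 log 30 - 15 log 15 - 10 log 10 - 6 log 6 ≈ 27.6`.
If `(m, 4m/3)` held no prime, then `θ(4m/3) = θ(m)`. The lower bound gives
`θ(4m/3) ≳ 4κm/90 ≈ 1.228 m`, while the upper bound together with `θ(x) ≤ x log 4` gives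
`θ(m) ≲ (κ + 10 log 2) m/30 ≈ 1.152 m`. The error term `2√x log x` of `ψ - θ` is below the gap
once `m ≥ 2²⁰`, and smaller `m` are covered by an explicit chain of primes.
-/

open Finset Real Chebyshev
open scoped Nat

def chebyshevDigit (k : ℕ) : ℕ := k + k / 30 - (k / 2 + k / 3 + k / 5)

lemma div_two_add_div_three_add_div_five_le (k : ℕ) : k / 2 + k / 3 + k / 5 ≤ k + k / 30 := by
  omega

lemma chebyshevDigit_le_one (k : ℕ) : chebyshevDigit k ≤ 1 := by
  unfold chebyshevDigit
  omega

lemma chebyshevDigit_eq_one {k : ℕ} (hk₀ : 0 < k) (hk : k < 6) : chebyshevDigit k = 1 := by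
  unfold chebyshevDigit
  omega

def chebyshevNum (M : ℕ) : ℕ := (30 * M)! * M !

def chebyshevDen (M : ℕ) : ℕ := (15 * M)! * (10 * M)! * (6 * M)!

def chebyshevQuot (M : ℕ) : ℕ := chebyshevNum M / chebyshevDen M

lemma chebyshevNum_pos (M : ℕ) : 0 < chebyshevNum M := by
  unfold chebyshevNum
  positivity

lemma chebyshevDen_pos (M : ℕ) : 0 < chebyshevDen M := by
  unfold chebyshevDen
  positivity

lemma factorization_factorial_mul {p : ℕ} (hp : p.Prime) {c d N : ℕ} (hcd : c * d = N)
    (hd : 0 < d) (M : ℕ) :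
    (c * M)!.factorization p = ∑ i ∈ Ico 1 (Nat.log p (N * M) + 1), N * M / p ^ i / d := by
  have hcM : c * M ≤ N * M :=
    Nat.mul_le_mul_right M (by rw [← hcd]; exact Nat.le_mul_of_pos_right c hd)
  rw [Nat.factorization_factorial hp (Nat.lt_succ_of_le (Nat.log_mono_right hcM))]
  refine sum_congr rfl fun i _ => ?_
  rw [← hcd, mul_comm c d, mul_assoc, Nat.div_div_eq_div_mul, mul_comm _ d,
    Nat.mul_div_mul_left _ _ hd]

lemma factorization_chebyshevNum {p : ℕ} (hp : p.Prime) (M : ℕ) :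
    (chebyshevNum M).factorization p =
      ∑ i ∈ Ico 1 (Nat.log p (30 * M) + 1), (30 * M / p ^ i + 30 * M / p ^ i / 30) := by
  rw [chebyshevNum, Nat.factorization_mul (Nat.factorial_ne_zero _) (Nat.factorial_ne_zero _),
    Finsupp.add_apply, factorization_factorial_mul hp (show 30 * 1 = 30 from rfl) one_pos,
    ← one_mul M, factorization_factorial_mul hp (show 1 * 30 = 30 from rfl) (by norm_num),
    one_mul, ← sum_add_distrib]
  simp only [Nat.div_one]

lemma factorization_chebyshevDen {p : ℕ} (hp : p.Prime) (M : ℕ) :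
    (chebyshevDen M).factorization p =
      ∑ i ∈ Ico 1 (Nat.log p (30 * M) + 1),
        (30 * M / p ^ i / 2 + 30 * M / p ^ i / 3 + 30 * M / p ^ i / 5) := by
  simp only [chebyshevDen, Nat.factorization_mul, Nat.factorial_ne_zero, mul_ne_zero_iff, ne_eq,
    not_false_eq_true, and_self, Finsupp.add_apply,
    factorization_factorial_mul hp (show 15 * 2 = 30 from rfl) (by norm_num),
    factorization_factorial_mul hp (show 10 * 3 = 30 from rfl) (by norm_num),
    factorization_factorial_mul hp (show 6 * 5 = 30 from rfl) (by norm_num), sum_add_distrib]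

lemma chebyshevDen_dvd_chebyshevNum (M : ℕ) : chebyshevDen M ∣ chebyshevNum M := by
  rw [← Nat.factorization_le_iff_dvd (chebyshevDen_pos M).ne' (chebyshevNum_pos M).ne']
  intro p
  by_cases hp : p.Prime
  · rw [factorization_chebyshevNum hp, factorization_chebyshevDen hp]
    exact sum_le_sum fun i _ => div_two_add_div_three_add_div_five_le _
  · simp [Nat.factorization_eq_zero_of_not_prime _ hp]

lemma chebyshevQuot_pos (M : ℕ) : 0 < chebyshevQuot M :=
  Nat.div_pos (Nat.le_of_dvd (chebyshevNum_pos M) (chebyshevDen_dvd_chebyshevNum M))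
    (chebyshevDen_pos M)

lemma factorization_chebyshevQuot {p : ℕ} (hp : p.Prime) (M : ℕ) :
    (chebyshevQuot M).factorization p =
      ∑ i ∈ Ico 1 (Nat.log p (30 * M) + 1), chebyshevDigit (30 * M / p ^ i) := by
  rw [chebyshevQuot, Nat.factorization_div (chebyshevDen_dvd_chebyshevNum M), Finsupp.tsub_apply,
    factorization_chebyshevNum hp, factorization_chebyshevDen hp,
    ← sum_tsub_distrib _ fun i _ => div_two_add_div_three_add_div_five_le _]
  rfl

lemma chebyshevQuot_dvd_lcmUpto (M : ℕ) : chebyshevQuot M ∣ Nat.lcmUpto (30 * M) := by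
  rw [← Nat.factorization_le_iff_dvd (chebyshevQuot_pos M).ne' (Nat.lcmUpto_ne_zero _)]
  intro p
  by_cases hp : p.Prime
  · rw [factorization_chebyshevQuot hp, Nat.factorization_lcmUpto _ hp]
    calc _ ≤ ∑ i ∈ Ico 1 (Nat.log p (30 * M) + 1), 1 :=
          sum_le_sum fun i _ => chebyshevDigit_le_one _
      _ = Nat.log p (30 * M) := by simp
  · simp [Nat.factorization_eq_zero_of_not_prime _ hp]

lemma prime_dvd_chebyshevQuot {p M : ℕ} (hp : p.Prime) (h5 : 5 * M < p) (h30 : p ≤ 30 * M) :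
    p ∣ chebyshevQuot M := by
  rw [hp.dvd_iff_one_le_factorization (chebyshevQuot_pos M).ne', factorization_chebyshevQuot hp]
  have hdigit : chebyshevDigit (30 * M / p ^ 1) = 1 := by
    rw [pow_one]
    exact chebyshevDigit_eq_one (Nat.div_pos h30 hp.pos)
      ((Nat.div_lt_iff_lt_mul hp.pos).2 (by omega))
  have hlog : 1 ≤ Nat.log p (30 * M) := Nat.le_log_of_pow_le hp.one_lt (by rwa [pow_one])
  calc 1 = chebyshevDigit (30 * M / p ^ 1) := hdigit.symm
    _ ≤ _ := single_le_sum (f := fun i => chebyshevDigit (30 * M / p ^ i))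
      (fun _ _ => Nat.zero_le _) (by simp only [mem_Ico]; omega)

lemma primorial_dvd_primorial_mul_chebyshevQuot (M : ℕ) :
    primorial (30 * M) ∣ primorial (5 * M) * chebyshevQuot M := by
  have hsplit := primorial_add (5 * M) (25 * M)
  rw [show 5 * M + 25 * M = 30 * M by ring] at hsplit
  rw [hsplit]
  refine mul_dvd_mul_left _
    (prod_primes_dvd _ (fun p hp => (mem_filter.1 hp).2.prime) fun p hp => ?_)
  rw [mem_filter, mem_Ico] at hp
  exact prime_dvd_chebyshevQuot hp.2 (by omega) (by omega)

lemma theta_natCast (n : ℕ) : θ n = log (primorial n) := by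
  rw [theta_eq_log_primorial, Nat.floor_natCast]

lemma theta_le_theta_add_log_chebyshevQuot (M : ℕ) :
    θ (30 * M) ≤ θ (5 * M) + log (chebyshevQuot M) := by
  have hdvd := Nat.le_of_dvd (Nat.mul_pos (primorial_pos _) (chebyshevQuot_pos M))
    (primorial_dvd_primorial_mul_chebyshevQuot M)
  have hlog := log_le_log (by exact_mod_cast primorial_pos _) (show
    ((primorial (30 * M) : ℕ) : ℝ) ≤ (primorial (5 * M) : ℕ) * (chebyshevQuot M : ℕ) by
      exact_mod_cast hdvd)
  rw [log_mul (by exact_mod_cast (primorial_pos _).ne')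
    (by exact_mod_cast (chebyshevQuot_pos M).ne')] at hlog
  have h30 := theta_natCast (30 * M)
  have h5 := theta_natCast (5 * M)
  push_cast at h30 h5
  rwa [h30, h5]

lemma log_chebyshevQuot_le_psi (M : ℕ) : log (chebyshevQuot M) ≤ ψ (30 * M) := by
  have hψ := psi_eq_log_lcmUpto (30 * M)
  push_cast at hψ
  rw [hψ]
  exact log_le_log (by exact_mod_cast chebyshevQuot_pos M)
    (by exact_mod_cast Nat.le_of_dvd (Nat.lcmUpto_pos _) (chebyshevQuot_dvd_lcmUpto M))

lemma theta_le_theta_of_forall_prime_le {a b : ℕ} (h : ∀ p, p.Prime → p ≤ a → p ≤ b) :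
    θ a ≤ θ b := by
  rw [theta_eq_sum_primesLE_log, theta_eq_sum_primesLE_log]
  refine sum_le_sum_of_subset_of_nonneg (fun p hp => ?_) fun p _ _ => log_natCast_nonneg p
  rw [Nat.mem_primesLE] at hp ⊢
  exact ⟨h p hp.2 hp.1, hp.2⟩

lemma log_factorial_le (n : ℕ) : log n ! ≤ n * log n - n + log n / 2 + 1 := by
  rcases n.eq_zero_or_pos with rfl | hn
  · simp
  obtain ⟨k, rfl⟩ := Nat.exists_eq_add_of_le' hn
  have hseq : Stirling.stirlingSeq (k + 1) ≤ exp 1 / √2 := by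
    simpa using Stirling.stirlingSeq'_antitone (Nat.zero_le k)
  have hlog := log_le_log (Stirling.stirlingSeq'_pos k) hseq
  rw [Stirling.log_stirlingSeq_formula, log_div (exp_pos 1).ne' (by positivity), log_exp, log_sqrt
    (by norm_num), log_mul (by norm_num) (by positivity), log_div (by positivity) (exp_pos 1).ne',
    log_exp] at hlog
  linarith

lemma mul_log_sub_le_log_factorial (n : ℕ) : n * log n - n ≤ log n ! := by
  rcases eq_or_ne n 0 with rfl | hn
  · simp
  have := Stirling.le_log_factorial_stirling hn
  have := log_natCast_nonneg n
  have : 0 ≤ log (2 * π) := log_nonneg (by linarith [pi_gt_three])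
  linarith

noncomputable def chebyshevConst : ℝ := 30 * log 30 - 15 * log 15 - 10 * log 10 - 6 * log 6

lemma abs_log_chebyshevQuot_sub_le {M : ℕ} (hM : 0 < M) :
    |log (chebyshevQuot M) - chebyshevConst * M| ≤ 2 * log (30 * M) + 3 := by
  have hM' : (0 : ℝ) < M := by exact_mod_cast hM
  have hQ : (chebyshevQuot M : ℝ) * chebyshevDen M = chebyshevNum M := by
    exact_mod_cast Nat.div_mul_cancel (chebyshevDen_dvd_chebyshevNum M)
  have hlogQ := congrArg log hQ
  simp only [chebyshevNum, chebyshevDen, Nat.cast_mul] at hlogQ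
  simp only [log_mul, ne_eq, Nat.cast_eq_zero, Nat.factorial_ne_zero, not_false_eq_true,
    mul_ne_zero_iff, and_self, (chebyshevQuot_pos M).ne'] at hlogQ
  have hlogc : ∀ c : ℝ, 0 < c → log (c * M) = log c + log M := fun c hc =>
    log_mul hc.ne' hM'.ne'
  have up15 := log_factorial_le (15 * M)
  have up10 := log_factorial_le (10 * M)
  have up6 := log_factorial_le (6 * M)
  have up30 := log_factorial_le (30 * M)
  have up1 := log_factorial_le M
  have lo15 := mul_log_sub_le_log_factorial (15 * M)
  have lo10 := mul_log_sub_le_log_factorial (10 * M)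
  have lo6 := mul_log_sub_le_log_factorial (6 * M)
  have lo30 := mul_log_sub_le_log_factorial (30 * M)
  have lo1 := mul_log_sub_le_log_factorial M
  push_cast at up15 up10 up6 up30 lo15 lo10 lo6 lo30
  rw [hlogc 15 (by norm_num)] at up15 lo15
  rw [hlogc 10 (by norm_num)] at up10 lo10
  rw [hlogc 6 (by norm_num)] at up6 lo6
  rw [hlogc 30 (by norm_num)] at up30 lo30 ⊢
  rw [abs_le, chebyshevConst]
  have := log_natCast_nonneg M
  have : 0 ≤ log (30 : ℝ) := log_nonneg (by norm_num)
  have : log (15 : ℝ) ≤ log 30 := log_le_log (by norm_num) (by norm_num)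
  have : log (10 : ℝ) ≤ log 30 := log_le_log (by norm_num) (by norm_num)
  have : log (6 : ℝ) ≤ log 30 := log_le_log (by norm_num) (by norm_num)
  constructor <;> linarith

lemma chebyshevConst_ge : 155 / 4 * log 2 ≤ chebyshevConst := by
  have h30 : log 30 = log 2 + log 3 + log 5 := by
    rw [show (30 : ℝ) = 2 * 3 * 5 by norm_num, log_mul (by norm_num) (by norm_num),
      log_mul (by norm_num) (by norm_num)]
  have h15 : log 15 = log 3 + log 5 := by
    rw [show (15 : ℝ) = 3 * 5 by norm_num, log_mul (by norm_num) (by norm_num)]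
  have h10 : log 10 = log 2 + log 5 := by
    rw [show (10 : ℝ) = 2 * 5 by norm_num, log_mul (by norm_num) (by norm_num)]
  have h6 : log 6 = log 2 + log 3 := by
    rw [show (6 : ℝ) = 2 * 3 by norm_num, log_mul (by norm_num) (by norm_num)]
  have h3 : 3 * log 2 ≤ 2 * log 3 := by
    simpa only [log_pow, Nat.cast_ofNat] using
      log_le_log (by norm_num) (show (2 : ℝ) ^ 3 ≤ 3 ^ 2 by norm_num)
  have h5 : 9 * log 2 ≤ 4 * log 5 := by
    simpa only [log_pow, Nat.cast_ofNat] using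
      log_le_log (by norm_num) (show (2 : ℝ) ^ 9 ≤ 5 ^ 4 by norm_num)
  rw [chebyshevConst, h30, h15, h10, h6]
  linarith

lemma theta_le_chebyshevConst_mul {M : ℕ} (hM : 0 < M) :
    θ (30 * M) ≤ (chebyshevConst + 10 * log 2) * M + 2 * log (30 * M) + 3 := by
  have h5 := theta_le_log4_mul_x (x := 5 * M) (by positivity)
  have hQ := (abs_le.mp (abs_log_chebyshevQuot_sub_le hM)).2
  rw [show (4 : ℝ) = 2 ^ 2 by norm_num, log_pow, Nat.cast_ofNat] at h5
  linarith [theta_le_theta_add_log_chebyshevQuot M]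

lemma chebyshevConst_mul_le_theta {M : ℕ} (hM : 0 < M) :
    chebyshevConst * M - 2 * √(30 * M) * log (30 * M) - 2 * log (30 * M) - 3 ≤ θ (30 * M) := by
  have hM₁ : (1 : ℝ) ≤ M := by exact_mod_cast hM
  have hψ := psi_sub_theta_le (x := 30 * M) (by linarith)
  have hQ := (abs_le.mp (abs_log_chebyshevQuot_sub_le hM)).1
  linarith [log_chebyshevQuot_le_psi M]

lemma le_sqrt_of_two_pow_twenty_le {y : ℝ} (hy : 2 ^ 20 ≤ y) : 1024 ≤ √y := by
  rw [show (1024 : ℝ) = √(1024 ^ 2) by rw [sqrt_sq (by norm_num)]]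
  exact sqrt_le_sqrt (by linarith)

lemma sqrt_mul_log_le {y : ℝ} (hy : 2 ^ 20 ≤ y) : √y * log y ≤ y / 70 := by
  set t := √y
  have hty : y = t ^ 2 := (sq_sqrt (by linarith)).symm
  have ht : 1024 ≤ t := le_sqrt_of_two_pow_twenty_le hy
  -- the tangent line of `log` at `2 ^ 10`
  have hlogt : log t ≤ 10 * log 2 + t / 1024 - 1 := by
    have := log_le_sub_one_of_pos (x := t / 1024) (by positivity)
    rw [log_div (by positivity) (by norm_num), show (1024 : ℝ) = 2 ^ 10 by norm_num,
      log_pow] at this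
    push_cast at this
    linarith
  have hlogy : log y = 2 * log t := by rw [hty, log_pow]; push_cast; ring
  rw [hlogy, hty]
  nlinarith [log_two_lt_d9]

lemma log_le_of_two_pow_twenty_le {y : ℝ} (hy : 2 ^ 20 ≤ y) : log y ≤ y / 70000 := by
  have := le_sqrt_of_two_pow_twenty_le hy
  have := sqrt_mul_log_le hy
  have := log_nonneg (show (1 : ℝ) ≤ y by linarith)
  nlinarith

lemma exists_prime_of_isChain {c d a m : ℕ} {l : List ℕ}
    (hl : (a :: l).IsChain (fun x y => d * y < c * x)) (hprime : ∀ p ∈ l, p.Prime)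
    (ham : a ≤ m) (hm : ∃ p ∈ l, m < p) : ∃ p, p.Prime ∧ m < p ∧ d * p < c * m := by
  induction l generalizing a with
  | nil => simp at hm
  | cons b l ih =>
    rw [List.isChain_cons_cons] at hl
    rcases lt_or_ge m b with hmb | hbm
    · exact ⟨b, hprime b (by simp), hmb, hl.1.trans_le (Nat.mul_le_mul_left c ham)⟩
    · obtain ⟨p, hp, hmp⟩ := hm
      have hpl : p ∈ l := by
        rcases List.mem_cons.1 hp with rfl | hp
        · omega
        · exact hp
      exact ih hl.2 (fun q hq => hprime q (List.mem_cons_of_mem b hq)) hbm ⟨p, hpl, hmp⟩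

lemma exists_prime_lt_and_three_mul_lt_four_mul_of_lt {m : ℕ} (h14 : 14 ≤ m) (hm : m < 2 ^ 20) :
    ∃ p, p.Prime ∧ m < p ∧ 3 * p < 4 * m :=
  exists_prime_of_isChain (a := 14)
    (l := [17, 19, 23, 29, 37, 47, 61, 79, 103, 137, 181, 241, 317, 421, 557, 739, 983, 1307, 1741,
      2311, 3079, 4099, 5449, 7253, 9661, 12853, 17137, 22817, 30403, 40531, 54037, 72047, 96059,
      128053, 170711, 227611, 303473, 404597, 539449, 719239, 958973, 1278623])
    (by decide) (by norm_num) h14 ⟨1278623, by simp, by omega⟩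

lemma exists_prime_lt_and_three_mul_lt_four_mul_of_le {m : ℕ} (hm : 2 ^ 20 ≤ m) :
    ∃ p, p.Prime ∧ m < p ∧ 3 * p < 4 * m := by
  by_contra! hgap
  -- `30 M` lies just below `4m/3` and `30 M'` just above `m`
  set M := (4 * m - 1) / 90 with hM
  set M' := (m + 29) / 30 with hM'
  have hθ : θ (30 * M) ≤ θ (30 * M') := by
    have := theta_le_theta_of_forall_prime_le (a := 30 * M) (b := 30 * M') fun p hp hpM => by
      by_contra h
      have := hgap p hp (by omega)
      omega
    exact_mod_cast this
  have hlow := chebyshevConst_mul_le_theta (M := M) (by omega)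
  have hup := theta_le_chebyshevConst_mul (M := M') (by omega)
  have hMr : 4 * (m : ℝ) ≤ 90 * M + 90 := by
    exact_mod_cast (show 4 * m ≤ 90 * M + 90 by omega)
  have hMr' : 90 * (M : ℝ) ≤ 4 * m := by exact_mod_cast (show 90 * M ≤ 4 * m by omega)
  have hM'r : 30 * (M' : ℝ) ≤ m + 29 := by exact_mod_cast (show 30 * M' ≤ m + 29 by omega)
  have hM'r' : (m : ℝ) ≤ 30 * M' := by exact_mod_cast (show m ≤ 30 * M' by omega)
  have hmr : (2 : ℝ) ^ 20 ≤ m := by exact_mod_cast hm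
  have hy : (2 : ℝ) ^ 20 ≤ 30 * M := by linarith
  have hy' : (2 : ℝ) ^ 20 ≤ 30 * M' := by linarith
  have hsqrt := sqrt_mul_log_le hy
  have hlog := log_le_of_two_pow_twenty_le hy
  have hlog' := log_le_of_two_pow_twenty_le hy'
  have hκ := chebyshevConst_ge
  have hl2 := log_two_gt_d9
  have hMM' : (M' : ℝ) ≤ M := by linarith
  have hκM := mul_le_mul_of_nonneg_right hκ (sub_nonneg.2 hMM')
  have hX : 0 ≤ 155 / 4 * ((M : ℝ) - M') - 10 * M' := by linarith
  have hl2X := mul_le_mul_of_nonneg_right hl2.le hX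
  linarith

lemma exists_prime_lt_and_three_mul_lt_four_mul {m : ℕ} (hm : 14 ≤ m) :
    ∃ p, p.Prime ∧ m < p ∧ 3 * p < 4 * m := by
  rcases lt_or_ge m (2 ^ 20) with h | h
  · exact exists_prime_lt_and_three_mul_lt_four_mul_of_lt hm h
  · exact exists_prime_lt_and_three_mul_lt_four_mul_of_le h

lemma lt_mul_and_mul_lt_of_div {c d k b p : ℕ} (hb : 0 < b) (hp : k / b < p)
    (hpc : d * p < c * (k / b)) : k < b * p ∧ d * (b * p) < c * k := by
  refine ⟨by rw [mul_comm]; exact (Nat.div_lt_iff_lt_mul hb).1 hp, ?_⟩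
  calc d * (b * p) = b * (d * p) := by ring
    _ < b * (c * (k / b)) := Nat.mul_lt_mul_of_pos_left hpc hb
    _ = c * (b * (k / b)) := by ring
    _ ≤ c * k := Nat.mul_le_mul_left c (Nat.mul_div_le k b)

theorem exists_prime_pair_mul_between_general (a : ℕ) (ha : 0 < a) (n : ℕ)
    (h : 5 * n > 72 * a) :
    ∃ p q : ℕ, p.Prime ∧ q.Prime ∧
      2 * n < 2 * (a * p) ∧ 2 * (a * p) < 3 * n ∧
      3 * n < 2 * (a * q) ∧ 2 * (a * q) < 4 * n := by
  obtain ⟨p, hp, hnp, hp4⟩ :=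
    exists_prime_lt_and_three_mul_lt_four_mul (m := n / a)
      ((Nat.le_div_iff_mul_le ha).2 (by omega))
  obtain ⟨q, hq, hnq, hq4⟩ := exists_prime_lt_and_three_mul_lt_four_mul (m := 3 * n / (2 * a))
    ((Nat.le_div_iff_mul_le (by omega)).2 (by omega))
  have hap := lt_mul_and_mul_lt_of_div ha hnp hp4
  have haq := lt_mul_and_mul_lt_of_div (by omega) hnq hq4
  rw [mul_assoc] at haq
  exact ⟨p, q, hp, hq, by omega, by omega, by omega, by omega⟩

theorem exists_prime_pair_mul_between (a : ℕ) (ha : 0 < a) (n : ℕ) (hn : 0 < n)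
    (h : 5 * n > 72 * a) :
    ∃ p q : ℕ, p.Prime ∧ q.Prime ∧
      2 * n < 2 * (a * p) ∧ 2 * (a * p) < 3 * n ∧
      3 * n < 2 * (a * q) ∧ 2 * (a * q) < 4 * n :=
  exists_prime_pair_mul_between_general a ha n h
end

section
/- If m is a positive integer, then for every positive integer n > 14.4/(1.5^(1/m) − 1)^m there exists at least one positive integer a such that n < a^m < 3n/2 (equivalently, 2n < 2a^m < 3n). -/
/-!
Put `x = n ^ (1/m)` and `c = 1.5 ^ (1/m)`. The hypothesis says `(x (c - 1)) ^ m > 14.4 ≥ 1`,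
so the interval `(x, c x)` is longer than `1` and contains an integer `a`; raising to the
`m`-th power gives `n < a ^ m < 1.5 n`.
-/

theorem exists_nat_mem_Ioo_of_one_lt_sub {x y : ℝ} (hx : 0 ≤ x) (h : 1 < y - x) :
    ∃ a : ℕ, x < a ∧ (a : ℝ) < y :=
  ⟨⌊x⌋₊ + 1, by push_cast; exact Nat.lt_floor_add_one x,
    by push_cast; linarith [Nat.floor_le hx]⟩

theorem exists_nat_pow_mem_Ioo {N r : ℝ} {m : ℕ} (hm : m ≠ 0) (hr : 1 ≤ r)
    (h : 1 < N * (r ^ (m⁻¹ : ℝ) - 1) ^ m) :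
    ∃ a : ℕ, N < (a : ℝ) ^ m ∧ (a : ℝ) ^ m < r * N := by
  set c := r ^ (m⁻¹ : ℝ)
  have hc : 0 ≤ c - 1 := sub_nonneg.mpr (Real.one_le_rpow hr (by positivity))
  have hN : 0 ≤ N := by
    by_contra! hN
    nlinarith [pow_nonneg hc m]
  set x := N ^ (m⁻¹ : ℝ)
  have hx : 0 ≤ x := by positivity
  have hxN : x ^ m = N := Real.rpow_inv_natCast_pow hN hm
  have hcr : c ^ m = r := Real.rpow_inv_natCast_pow (by linarith) hm
  have hgap : 1 < c * x - x := by
    have : 1 < (x * (c - 1)) ^ m := by rwa [mul_pow, hxN]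
    linarith [(one_lt_pow_iff_of_nonneg (by positivity) hm).mp this]
  obtain ⟨a, hxa, hac⟩ := exists_nat_mem_Ioo_of_one_lt_sub hx hgap
  refine ⟨a, ?_, ?_⟩
  · simpa only [hxN] using pow_lt_pow_left₀ hxa hx hm
  · simpa only [mul_pow, hcr, hxN] using pow_lt_pow_left₀ hac (by positivity) hm

theorem exists_pow_between_left'_general (m : ℕ) (hm : 0 < m) (n : ℕ)
    (h : (n : ℝ) > 14.4 / ((1.5 : ℝ) ^ ((1 : ℝ) / (m : ℝ)) - 1) ^ m) :
    ∃ a : ℕ, 0 < a ∧ 2 * n < 2 * a ^ m ∧ 2 * a ^ m < 3 * n := by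
  rw [one_div] at h
  have hc : 0 < (1.5 : ℝ) ^ (m⁻¹ : ℝ) - 1 :=
    sub_pos.mpr (Real.one_lt_rpow (by norm_num) (by positivity))
  rw [gt_iff_lt, div_lt_iff₀ (by positivity)] at h
  obtain ⟨a, hlow, hhigh⟩ :=
    exists_nat_pow_mem_Ioo (N := n) (r := 1.5) hm.ne' (by norm_num) (by linarith)
  have hlow' : n < a ^ m := by exact_mod_cast hlow
  have hhigh' : 2 * a ^ m < 3 * n := by
    exact_mod_cast (by linarith : 2 * (a : ℝ) ^ m < 3 * n)
  refine ⟨a, Nat.pos_of_ne_zero ?_, by omega, hhigh'⟩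
  rintro rfl
  simp [zero_pow hm.ne'] at hlow'

theorem exists_pow_between_left' (m : ℕ) (hm : 0 < m) (n : ℕ) (hn : 0 < n)
    (h : (n : ℝ) > 14.4 / ((1.5 : ℝ) ^ ((1 : ℝ) / (m : ℝ)) - 1) ^ m) :
    ∃ a : ℕ, 0 < a ∧ 2 * n < 2 * a ^ m ∧ 2 * a ^ m < 3 * n :=
  exists_pow_between_left'_general m hm n h
end

section
/- If m is a positive integer, then for every positive integer n > 14.4/(2^(1/m) − 1.5^(1/m))^m there exists at least one positive integer a such that 3n/2 < a^m < 2n (equivalently, 3n < 2a^m < 4n). -/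
/-!
With `c = 2^(1/m) - 1.5^(1/m)`, the `m`-th roots of `3n/2` and `2n` differ by `c n^(1/m)`, whose
`m`-th power `c^m n` exceeds `14.4 > 1`. An interval of length greater than one starting at
`(3n/2)^(1/m) ≥ 0` contains a positive integer `a`, and raising to the `m`-th power gives
`3n/2 < a^m < 2n`.
-/

open Real

lemma exists_nat_pow_mem_Ioo_s17 {m : ℕ} (hm : m ≠ 0) {u v : ℝ} (hu : 0 ≤ u) (huv : u + 1 < v) :
    ∃ a : ℕ, 0 < a ∧ u ^ m < (a : ℝ) ^ m ∧ (a : ℝ) ^ m < v ^ m := by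
  refine ⟨⌊u⌋₊ + 1, Nat.succ_pos _, ?_, ?_⟩
  · push_cast
    exact pow_lt_pow_left₀ (Nat.lt_floor_add_one u) hu hm
  · have hav : (⌊u⌋₊ + 1 : ℝ) < v := by linarith [Nat.floor_le hu]
    push_cast
    exact pow_lt_pow_left₀ hav (by positivity) hm

lemma exists_nat_pow_mem_Ioo_of_one_lt_root_sub {m : ℕ} (hm : m ≠ 0) {x y : ℝ}
    (hx : 0 ≤ x) (hy : 0 ≤ y) (h : 1 < y ^ ((1 : ℝ) / m) - x ^ ((1 : ℝ) / m)) :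
    ∃ a : ℕ, 0 < a ∧ x < (a : ℝ) ^ m ∧ (a : ℝ) ^ m < y := by
  obtain ⟨a, ha, hxa, hay⟩ :=
    exists_nat_pow_mem_Ioo_s17 hm (rpow_nonneg hx _) (by linarith : x ^ ((1 : ℝ) / m) + 1 < y ^ ((1 : ℝ) / m))
  rw [one_div, rpow_inv_natCast_pow hx hm] at hxa
  rw [one_div, rpow_inv_natCast_pow hy hm] at hay
  exact ⟨a, ha, hxa, hay⟩

lemma one_lt_root_mul_sub_root_mul {m : ℕ} (hm : m ≠ 0) {a b t : ℝ} (ha : 0 ≤ a) (hab : a ≤ b)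
    (ht : 0 ≤ t) (h : 1 < (b ^ ((1 : ℝ) / m) - a ^ ((1 : ℝ) / m)) ^ m * t) :
    1 < (b * t) ^ ((1 : ℝ) / m) - (a * t) ^ ((1 : ℝ) / m) := by
  set c := b ^ ((1 : ℝ) / m) - a ^ ((1 : ℝ) / m)
  have hc : 0 ≤ c := sub_nonneg.mpr (rpow_le_rpow ha hab (by positivity))
  have hgap : (b * t) ^ ((1 : ℝ) / m) - (a * t) ^ ((1 : ℝ) / m) = c * t ^ ((1 : ℝ) / m) := by
    rw [mul_rpow (ha.trans hab) ht, mul_rpow ha ht]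
    ring
  have hgap_pow : (c * t ^ ((1 : ℝ) / m)) ^ m = c ^ m * t := by
    rw [mul_pow, one_div, rpow_inv_natCast_pow ht hm]
  rw [hgap, ← one_lt_pow_iff_of_nonneg (by positivity) hm, hgap_pow]
  exact h

theorem exists_pow_between_right_general (m : ℕ) (hm : 0 < m) (n : ℕ)
    (h : (n : ℝ) > 14.4 / ((2 : ℝ) ^ ((1 : ℝ) / (m : ℝ)) - (1.5 : ℝ) ^ ((1 : ℝ) / (m : ℝ))) ^ m) :
    ∃ a : ℕ, 0 < a ∧ 3 * n < 2 * a ^ m ∧ 2 * a ^ m < 4 * n := by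
  set c := (2 : ℝ) ^ ((1 : ℝ) / m) - (1.5 : ℝ) ^ ((1 : ℝ) / m)
  have hc : 0 < c ^ m :=
    pow_pos (sub_pos.mpr (rpow_lt_rpow (by norm_num) (by norm_num) (by positivity))) m
  have hn : (0 : ℝ) < n := lt_trans (by positivity) h
  have hcn : 1 < c ^ m * n := by linarith [(div_lt_iff₀' hc).mp h]
  obtain ⟨a, ha, hlow, hhigh⟩ := exists_nat_pow_mem_Ioo_of_one_lt_root_sub hm.ne'
    (by positivity) (by positivity)
    (one_lt_root_mul_sub_root_mul hm.ne' (by norm_num) (by norm_num) hn.le hcn)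
  refine ⟨a, ha, ?_, ?_⟩
  · exact_mod_cast (by linarith : (3 : ℝ) * n < 2 * a ^ m)
  · exact_mod_cast (by linarith : (2 : ℝ) * a ^ m < 4 * n)

theorem exists_pow_between_right (m : ℕ) (hm : 0 < m) (n : ℕ) (hn : 0 < n)
    (h : (n : ℝ) > 14.4 / ((2 : ℝ) ^ ((1 : ℝ) / (m : ℝ)) - (1.5 : ℝ) ^ ((1 : ℝ) / (m : ℝ))) ^ m) :
    ∃ a : ℕ, 0 < a ∧ 3 * n < 2 * a ^ m ∧ 2 * a ^ m < 4 * n :=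
  exists_pow_between_right_general m hm n h
end

section
/- If m is a positive integer, then for every positive integer n > 14.4/(2^(1/m) − 1.5^(1/m))^m there exist a prime number r and a positive integer a such that n < r < 3n/2 < a^m < 2n (equivalently, 2n < 2r < 3n < 2a^m < 4n). -/
/-
Chebyshev's method. For `T N = sumLog N = log N! = ∑_{d ≤ N} Λ d ⌊N/d⌋`, the combination
`chebyshevComb N = T N - T (N/2) - T (N/3) - T (N/5) + T (N/30)` gives `Λ d` the coefficient
`chebyshevWeight ⌊N/d⌋ ∈ {0, 1}`, equal to `1` when `N/6 < d ≤ N`; so it lies between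
`ψ N - ψ (N/6)` and `ψ N`. As `1 - 1/2 - 1/3 - 1/5 + 1/30 = 0`, the estimate
`T x = x log x - x + O(log x)` makes it `A N + O(log N)` with
`A = log 2/2 + log 3/3 + log 5/5 - log 30/30 ≈ 0.9213`. Telescoping over `N, N/6, N/36, …` gives
`ψ N ≤ 1.12 N + O(log N)`, whereas
`θ (3N/2) ≥ ψ (3N/2) - 2√N log N ≥ 1.5 A N - O(√N log N)`. Since `1.5 A > 1.12`, there is a
prime in `(N, 3N/2)` once `N ≥ 10^5`; an explicit chain of primes, each less than `3/2` times the
previous one, covers `29 ≤ N < 10^5`.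

For the power, the interval `((3n/2)^(1/m), (2n)^(1/m))` has length `n^(1/m) δ` with
`δ = 2^(1/m) - 1.5^(1/m)`, and `n δ^m > 14.4 > 1`, so it contains an integer. Subadditivity of
`t ↦ t^(1/m)` gives `δ^m ≤ 1/2`, so the hypothesis also forces `n > 28.8`.
-/

open Real Finset Chebyshev
open ArithmeticFunction hiding log

namespace PrimeBetween

noncomputable def chebyshevConst : ℝ := log 2 / 2 + log 3 / 3 + log 5 / 5 - log 30 / 30

lemma chebyshevConst_eq : chebyshevConst = 4 / 5 * log 2 + 3 / 10 * log 3 + log (5 / 4) / 6 := by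
  rw [chebyshevConst, show (30 : ℝ) = 2 * 3 * 5 by norm_num,
    show (5 / 4 : ℝ) = 5 / 2 ^ 2 by norm_num, log_mul (by norm_num) (by norm_num),
    log_mul (by norm_num) (by norm_num), log_div (by norm_num) (by norm_num), log_pow]
  push_cast
  ring

lemma le_chebyshevConst : 0.917 ≤ chebyshevConst := by
  have h := one_sub_inv_le_log_of_pos (show (0 : ℝ) < 5 / 4 by norm_num)
  rw [chebyshevConst_eq]
  norm_num at h
  linarith [log_two_gt_d9, log_three_gt_d9]

lemma chebyshevConst_le : chebyshevConst ≤ 0.926 := by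
  have h := log_le_sub_one_of_pos (show (0 : ℝ) < 5 / 4 by norm_num)
  rw [chebyshevConst_eq]
  linarith [log_two_lt_d9, log_three_lt_d9]

noncomputable def logAntideriv (x : ℝ) : ℝ := x * log x - x

lemma sub_mul_log_le_logAntideriv_sub {x y : ℝ} (hx : 0 < x) (hxy : x ≤ y) :
    (y - x) * log x ≤ logAntideriv y - logAntideriv x := by
  have hy := hx.trans_le hxy
  have h := log_le_sub_one_of_pos (div_pos hx hy)
  have h' := mul_le_mul_of_nonneg_left h hy.le
  rw [log_div hx.ne' hy.ne', mul_sub, mul_sub, mul_div_cancel₀ _ hy.ne', mul_one] at h'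
  unfold logAntideriv
  linarith

lemma logAntideriv_sub_le_sub_mul_log {x y : ℝ} (hx : 0 < x) (hxy : x ≤ y) :
    logAntideriv y - logAntideriv x ≤ (y - x) * log y := by
  have hy := hx.trans_le hxy
  have h := log_le_sub_one_of_pos (div_pos hy hx)
  have h' := mul_le_mul_of_nonneg_left h hx.le
  rw [log_div hy.ne' hx.ne', mul_sub, mul_sub, mul_div_cancel₀ _ hx.ne', mul_one] at h'
  unfold logAntideriv
  linarith

lemma logAntideriv_comb {x : ℝ} (hx : 0 < x) :
    logAntideriv x - logAntideriv (x / 2) - logAntideriv (x / 3) - logAntideriv (x / 5)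
      + logAntideriv (x / 30) = chebyshevConst * x := by
  simp only [logAntideriv, chebyshevConst]
  rw [log_div hx.ne' (by norm_num), log_div hx.ne' (by norm_num), log_div hx.ne' (by norm_num),
    log_div hx.ne' (by norm_num)]
  ring

noncomputable def sumLog (N : ℕ) : ℝ := ∑ n ∈ Ioc 0 N, log n

lemma sumLog_succ (N : ℕ) : sumLog (N + 1) = sumLog N + log (N + 1) := by
  rw [sumLog, sumLog, sum_Ioc_succ_top N.zero_le]
  push_cast
  rfl

lemma logAntideriv_add_one_le_sumLog {N : ℕ} (hN : 1 ≤ N) :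
    logAntideriv N + 1 ≤ sumLog N := by
  induction N, hN using Nat.le_induction with
  | base => simp [sumLog, logAntideriv]
  | succ N hN ih =>
    have hN' : (0 : ℝ) < N := by exact_mod_cast hN
    have h := logAntideriv_sub_le_sub_mul_log hN' (le_add_of_nonneg_right zero_le_one)
    rw [sumLog_succ]
    push_cast
    linarith

lemma sumLog_le_logAntideriv_add {N : ℕ} (hN : 1 ≤ N) :
    sumLog N ≤ logAntideriv N + log N + 1 := by
  induction N, hN using Nat.le_induction with
  | base => simp [sumLog, logAntideriv]
  | succ N hN ih =>
    have hN' : (0 : ℝ) < N := by exact_mod_cast hN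
    have h := sub_mul_log_le_logAntideriv_sub hN' (le_add_of_nonneg_right zero_le_one)
    have hlog : log N ≤ log (N + 1) := log_le_log hN' (by linarith)
    rw [sumLog_succ]
    push_cast
    linarith

lemma abs_sumLog_floor_sub_le {x : ℝ} (hx : 1 ≤ x) :
    |sumLog ⌊x⌋₊ - (logAntideriv x + 1)| ≤ log x := by
  have hN : 1 ≤ ⌊x⌋₊ := Nat.one_le_floor_iff x |>.2 hx
  have hN₁ : (1 : ℝ) ≤ ⌊x⌋₊ := by exact_mod_cast hN
  have hNx : (⌊x⌋₊ : ℝ) ≤ x := Nat.floor_le (by linarith)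
  have hxN : x - ⌊x⌋₊ ≤ 1 := by linarith [Nat.lt_floor_add_one x]
  have hlog : log ⌊x⌋₊ ≤ log x := log_le_log (by linarith) hNx
  have hlog₀ : 0 ≤ log x := log_nonneg hx
  have h₁ := sub_mul_log_le_logAntideriv_sub (by linarith) hNx
  have h₂ := logAntideriv_sub_le_sub_mul_log (by linarith) hNx
  have h₃ := logAntideriv_add_one_le_sumLog hN
  have h₄ := sumLog_le_logAntideriv_add hN
  rw [abs_le]
  constructor <;> nlinarith [mul_le_mul_of_nonneg_right hxN hlog₀, log_nonneg hN₁]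

noncomputable def chebyshevComb (N : ℕ) : ℝ :=
  sumLog N - sumLog (N / 2) - sumLog (N / 3) - sumLog (N / 5) + sumLog (N / 30)

lemma abs_chebyshevComb_sub_le {N : ℕ} (hN : 30 ≤ N) :
    |chebyshevComb N - (chebyshevConst * N - 1)| ≤ 5 * log N := by
  have hN₀ : (0 : ℝ) < N := by positivity
  have key : ∀ k : ℕ, 0 < k → k ≤ N →
      |sumLog (N / k) - (logAntideriv (N / k : ℝ) + 1)| ≤ log N := by
    intro k hk hkN
    have hk' : (0 : ℝ) < k := by exact_mod_cast hk
    have h1 : (1 : ℝ) ≤ N / k := by rw [one_le_div hk']; exact_mod_cast hkN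
    rw [← Nat.floor_div_eq_div (K := ℝ)]
    have hle : (N / k : ℝ) ≤ N := div_le_self hN₀.le (by exact_mod_cast hk)
    exact (abs_sumLog_floor_sub_le h1).trans (log_le_log (by linarith) hle)
  have h1 := key 1 one_pos (by omega)
  have h2 := key 2 two_pos (by omega)
  have h3 := key 3 three_pos (by omega)
  have h5 := key 5 (by norm_num) (by omega)
  have h30 := key 30 (by norm_num) hN
  simp only [Nat.div_one, Nat.cast_one, div_one, Nat.cast_ofNat] at h1 h2 h3 h5 h30
  have hcomb := logAntideriv_comb hN₀
  rw [abs_le] at h1 h2 h3 h5 h30 ⊢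
  unfold chebyshevComb
  constructor <;> linarith

def chebyshevWeight (n : ℕ) : ℤ :=
  n - (n / 2 : ℕ) - (n / 3 : ℕ) - (n / 5 : ℕ) + (n / 30 : ℕ)

lemma chebyshevWeight_nonneg (n : ℕ) : 0 ≤ chebyshevWeight n := by
  unfold chebyshevWeight; omega

lemma chebyshevWeight_le_one (n : ℕ) : chebyshevWeight n ≤ 1 := by
  unfold chebyshevWeight; omega

lemma chebyshevWeight_eq_one {n : ℕ} (h₁ : 1 ≤ n) (h₆ : n < 6) : chebyshevWeight n = 1 := by
  unfold chebyshevWeight; omega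

lemma sumLog_div_eq_sum_vonMangoldt (N k : ℕ) :
    sumLog (N / k) = ∑ d ∈ Ioc 0 N, Λ d * (N / d / k : ℕ) := by
  have h := sum_Ioc_mul_zeta_eq_sum Λ (N / k)
  rw [vonMangoldt_mul_zeta] at h
  simp only [log_apply] at h
  rw [sumLog, h]
  simp_rw [Nat.div_right_comm N _ k]
  refine sum_subset (Ioc_subset_Ioc_right (Nat.div_le_self N k)) fun d hd hd' => ?_
  rw [mem_Ioc] at hd hd'
  rw [Nat.div_eq_of_lt (by omega), Nat.cast_zero, mul_zero]

lemma chebyshevComb_eq_sum (N : ℕ) :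
    chebyshevComb N = ∑ d ∈ Ioc 0 N, Λ d * chebyshevWeight (N / d) := by
  have h := sumLog_div_eq_sum_vonMangoldt N 1
  simp only [Nat.div_one] at h
  rw [chebyshevComb, h, sumLog_div_eq_sum_vonMangoldt N 2, sumLog_div_eq_sum_vonMangoldt N 3,
    sumLog_div_eq_sum_vonMangoldt N 5, sumLog_div_eq_sum_vonMangoldt N 30, ← sum_sub_distrib,
    ← sum_sub_distrib, ← sum_sub_distrib, ← sum_add_distrib]
  refine sum_congr rfl fun d _ => ?_
  simp only [chebyshevWeight, Int.cast_add, Int.cast_sub, Int.cast_natCast]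
  ring

lemma psi_natCast (N : ℕ) : ψ N = ∑ n ∈ Ioc 0 N, Λ n := by
  rw [psi, Nat.floor_natCast]

lemma psi_le_sumLog (N : ℕ) : ψ N ≤ sumLog N := by
  rw [psi_natCast]
  exact sum_le_sum fun n _ => vonMangoldt_le_log

lemma chebyshevComb_le_psi (N : ℕ) : chebyshevComb N ≤ ψ N := by
  rw [chebyshevComb_eq_sum, psi_natCast]
  refine sum_le_sum fun d _ => mul_le_of_le_one_right vonMangoldt_nonneg ?_
  exact_mod_cast chebyshevWeight_le_one _

lemma psi_sub_psi_div_six_le (N : ℕ) : ψ N - ψ ↑(N / 6) ≤ chebyshevComb N := by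
  have hsplit := sum_Ioc_consecutive Λ (Nat.zero_le (N / 6)) (Nat.div_le_self N 6)
  rw [psi_natCast, psi_natCast, chebyshevComb_eq_sum, ← hsplit,
    ← sum_Ioc_consecutive _ (Nat.zero_le (N / 6)) (Nat.div_le_self N 6), add_sub_cancel_left]
  refine le_add_of_nonneg_of_le (sum_nonneg fun d _ => ?_) (sum_le_sum fun d hd => ?_)
  · exact mul_nonneg vonMangoldt_nonneg (by exact_mod_cast chebyshevWeight_nonneg _)
  · rw [mem_Ioc] at hd
    rw [chebyshevWeight_eq_one ((Nat.one_le_div_iff (by omega)).2 hd.2)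
      ((Nat.div_lt_iff_lt_mul (by omega)).2 (by omega)), Int.cast_one, mul_one]

lemma sqrt_sqrt_pow_four {y : ℝ} (hy : 0 ≤ y) : √√y ^ 4 = y := by
  rw [show √√y ^ 4 = (√√y ^ 2) ^ 2 by ring, sq_sqrt (sqrt_nonneg y), sq_sqrt hy]

-- `log t ≤ t / 16 + log 16 - 1` at `t = y ^ (1/4)`, and `4 (log 16 - 1) < 7.1`.
lemma log_le_sqrt_sqrt_div_four_add {y : ℝ} (hy : 0 < y) : log y ≤ √√y / 4 + 7.1 := by
  have hs : 0 < √√y := by positivity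
  have h := log_le_sub_one_of_pos (show 0 < √√y / 16 by positivity)
  rw [log_div hs.ne' (by norm_num), show (16 : ℝ) = 2 ^ 4 by norm_num, log_pow] at h
  have h4 := log_pow (√√y) 4
  rw [sqrt_sqrt_pow_four hy.le] at h4
  push_cast at h h4
  linarith [log_two_lt_d9]

lemma five_mul_log_le {y : ℝ} (hy : 0 < y) : 5 * log y ≤ 0.007 * y + 134 := by
  have h := log_le_sqrt_sqrt_div_four_add hy
  have hs4 := sqrt_sqrt_pow_four hy.le
  set s := √√y
  have hs : 0 ≤ s := by positivity
  nlinarith [sq_nonneg (s ^ 2 - 9), sq_nonneg (s - 3)]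

lemma psi_natCast_le {N : ℕ} (hN : 1 ≤ N) : ψ N ≤ 1.12 * N + 75 * log N + 75 := by
  induction N using Nat.strong_induction_on with
  | _ N ih =>
  have hN₁ : (1 : ℝ) ≤ N := by exact_mod_cast hN
  have hlog : 0 ≤ log N := log_nonneg hN₁
  rcases lt_or_ge N 30 with hN30 | hN30
  · have hN29 : (N : ℝ) ≤ 29 := by exact_mod_cast Nat.le_of_lt_succ hN30
    have h := (psi_le_sumLog N).trans (sumLog_le_logAntideriv_add hN)
    unfold logAntideriv at h
    nlinarith [mul_le_mul_of_nonneg_right hN29 hlog]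
  · have ih6 := ih (N / 6) (by omega) (by omega)
    have hdiv : ((N / 6 : ℕ) : ℝ) ≤ N / 6 := Nat.cast_div_le
    have hlog6 : log ((N / 6 : ℕ) : ℝ) ≤ log N - log 6 := by
      rw [← log_div (by positivity) (by norm_num)]
      exact log_le_log (by exact_mod_cast (show 0 < N / 6 by omega)) hdiv
    have hlog6' : 1.79 ≤ log 6 := by
      rw [show (6 : ℝ) = 2 * 3 by norm_num, log_mul (by norm_num) (by norm_num)]
      linarith [log_two_gt_d9, log_three_gt_d9]
    have hcomb := (abs_le.1 (abs_chebyshevComb_sub_le hN30)).2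
    have hA := mul_le_mul_of_nonneg_right chebyshevConst_le (by positivity : (0 : ℝ) ≤ N)
    linarith [psi_sub_psi_div_six_le N, five_mul_log_le (by positivity : (0 : ℝ) < N)]

lemma exists_prime_of_theta_lt {x y : ℝ} (h : θ x < θ y) :
    ∃ p : ℕ, p.Prime ∧ x < p ∧ p ≤ y := by
  by_contra! hxy
  refine h.not_ge <| sum_le_sum_of_subset_of_nonneg (fun p hp => ?_) fun p _ _ =>
    log_natCast_nonneg p
  simp only [mem_filter, mem_Ioc] at hp ⊢
  obtain ⟨⟨hp₀, hpy⟩, hp⟩ := hp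
  have hpx : (p : ℝ) ≤ x := not_lt.1 fun hxp => (hxy p hp hxp).not_ge <|
    (Nat.le_floor_iff' hp₀.ne').1 hpy
  exact ⟨⟨hp₀, Nat.le_floor hpx⟩, hp⟩

lemma sqrt_mul_log_add_log_lt {y : ℝ} (hy : 10 ^ 5 ≤ y) :
    2 * √y * log y + 80 * log y + 80 < 0.17 * y := by
  have hy0 : 0 < y := by linarith
  have h := log_le_sqrt_sqrt_div_four_add hy0
  have hlog : 0 ≤ log y := log_nonneg (by linarith)
  have hs4 := sqrt_sqrt_pow_four hy0.le
  set s := √√y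
  have hs2 : s ^ 2 = √y := sq_sqrt (sqrt_nonneg y)
  have hs : 17.7 ≤ s := by
    by_contra! hs
    nlinarith [sqrt_nonneg (√y), pow_le_pow_left₀ (sqrt_nonneg (√y)) hs.le 4]
  rw [← hs2]
  nlinarith [mul_le_mul_of_nonneg_left h (sq_nonneg s),
    mul_nonneg (sub_nonneg.2 hs) (sq_nonneg s),
    mul_nonneg (mul_nonneg (sub_nonneg.2 hs) (sq_nonneg s)) (sub_nonneg.2 hs)]

lemma exists_prime_lt_and_two_mul_lt_three_mul_of_large {N : ℕ} (hN : 10 ^ 5 ≤ N) :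
    ∃ p : ℕ, p.Prime ∧ N < p ∧ 2 * p < 3 * N := by
  set K := (3 * N - 1) / 2
  suffices θ N < θ K by
    obtain ⟨p, hp, hNp, hpK⟩ := exists_prime_of_theta_lt this
    have hpK : p ≤ K := by exact_mod_cast hpK
    exact ⟨p, hp, by exact_mod_cast hNp, by omega⟩
  have hNK : (3 * N : ℝ) ≤ 2 * K + 2 := by exact_mod_cast (show 3 * N ≤ 2 * K + 2 by omega)
  have hN' : (10 ^ 5 : ℝ) ≤ N := by exact_mod_cast hN
  have hlog : log N ≤ log K :=
    log_le_log (by positivity) (by exact_mod_cast (show N ≤ K by omega))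
  have hθK := psi_sub_theta_le (x := K) (by linarith)
  have hψK := (abs_le.1 (abs_chebyshevComb_sub_le (show 30 ≤ K by omega))).1
  have hA := mul_le_mul_of_nonneg_right le_chebyshevConst (by positivity : (0 : ℝ) ≤ K)
  have hθN := (theta_le_psi N).trans (psi_natCast_le (show 1 ≤ N by omega))
  linarith [chebyshevComb_le_psi K, sqrt_mul_log_add_log_lt (y := K) (by linarith)]

lemma exists_prime_lt_and_two_mul_lt_three_mul_of_isChain {a : ℕ} {l : List ℕ}
    (hl : ∀ p ∈ l, p.Prime) (hc : (a :: l).IsChain fun p q => 2 * q < 3 * p) {n : ℕ}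
    (han : a ≤ n) (hn : ∃ q ∈ l, n < q) :
    ∃ p : ℕ, p.Prime ∧ n < p ∧ 2 * p < 3 * n := by
  induction l generalizing a with
  | nil => simp at hn
  | cons b l ih =>
    rw [List.isChain_cons_cons] at hc
    rcases lt_or_ge n b with hnb | hbn
    · exact ⟨b, hl b List.mem_cons_self, hnb, by omega⟩
    · refine ih (fun p hp => hl p (List.mem_cons_of_mem b hp)) hc.2 hbn ?_
      obtain ⟨q, hq, hnq⟩ := hn
      exact ⟨q, (List.mem_cons.1 hq).resolve_left (by omega), hnq⟩

lemma exists_prime_lt_and_two_mul_lt_three_mul {n : ℕ} (hn : 29 ≤ n) :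
    ∃ p : ℕ, p.Prime ∧ n < p ∧ 2 * p < 3 * n := by
  rcases le_or_gt (10 ^ 5) n with hn' | hn'
  · exact exists_prime_lt_and_two_mul_lt_three_mul_of_large hn'
  · refine exists_prime_lt_and_two_mul_lt_three_mul_of_isChain
      (l := [43, 61, 89, 131, 193, 283, 421, 631, 941, 1409, 2113, 3169, 4751, 7121, 10667, 15991,
        23981, 35969, 53951, 80923, 121379]) ?_ (by decide) hn ⟨121379, by simp, by omega⟩
    simp only [List.forall_mem_cons, List.not_mem_nil, IsEmpty.forall_iff, implies_true, and_true]
    norm_num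

lemma rpow_one_div_sub_rpow_one_div_pow_le {m : ℕ} (hm : m ≠ 0) {a b : ℝ} (ha : 0 ≤ a)
    (hab : a ≤ b) : (b ^ ((1 : ℝ) / m) - a ^ ((1 : ℝ) / m)) ^ m ≤ b - a := by
  have hp₀ : (0 : ℝ) ≤ 1 / m := by positivity
  have hp₁ : (1 : ℝ) / m ≤ 1 :=
    div_le_one_of_le₀ (by exact_mod_cast Nat.one_le_iff_ne_zero.2 hm) (by positivity)
  have hsub := rpow_add_le_add_rpow ha (sub_nonneg.2 hab) hp₀ hp₁
  rw [add_sub_cancel] at hsub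
  calc (b ^ ((1 : ℝ) / m) - a ^ ((1 : ℝ) / m)) ^ m ≤ ((b - a) ^ ((1 : ℝ) / m)) ^ m :=
        pow_le_pow_left₀ (sub_nonneg.2 (rpow_le_rpow ha hab hp₀)) (by linarith) m
    _ = b - a := by rw [one_div, rpow_inv_natCast_pow (sub_nonneg.2 hab) hm]

lemma exists_nat_pow_mem_Ioo {m : ℕ} (hm : m ≠ 0) {α β x : ℝ} (hα : 0 ≤ α) (hαβ : α ≤ β)
    (hx : 0 ≤ x) (h : 1 < x * (β ^ ((1 : ℝ) / m) - α ^ ((1 : ℝ) / m)) ^ m) :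
    ∃ a : ℕ, α * x < a ^ m ∧ (a : ℝ) ^ m < β * x := by
  set L := (α * x) ^ ((1 : ℝ) / m)
  set R := (β * x) ^ ((1 : ℝ) / m)
  have hL : 0 ≤ L := by positivity
  have hRL : 1 < R - L := by
    have hRL₀ : 0 ≤ R - L := sub_nonneg.2 (rpow_le_rpow (by positivity)
      (mul_le_mul_of_nonneg_right hαβ hx) (by positivity))
    have hpow : (R - L) ^ m = x * (β ^ ((1 : ℝ) / m) - α ^ ((1 : ℝ) / m)) ^ m := by
      simp only [R, L]
      rw [mul_rpow (hα.trans hαβ) hx, mul_rpow hα hx, ← sub_mul, mul_pow, one_div,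
        rpow_inv_natCast_pow hx hm, mul_comm]
    by_contra! hle
    exact h.not_ge (hpow ▸ pow_le_one₀ hRL₀ hle)
  have hpow : ∀ {y : ℝ}, 0 ≤ y → (y ^ ((1 : ℝ) / m)) ^ m = y := fun hy => by
    rw [one_div, rpow_inv_natCast_pow hy hm]
  refine ⟨⌊L⌋₊ + 1, ?_, ?_⟩
  · rw [← hpow (mul_nonneg hα hx)]
    exact pow_lt_pow_left₀ (by exact_mod_cast Nat.lt_floor_add_one L) hL hm
  · rw [← hpow (mul_nonneg (hα.trans hαβ) hx)]
    have hfloor := Nat.floor_le hL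
    exact pow_lt_pow_left₀ (by push_cast; linarith) (by positivity) hm

end PrimeBetween

theorem exists_prime_and_pow_general (m : ℕ) (hm : 0 < m) (n : ℕ)
    (h : (n : ℝ) > 14.4 / ((2 : ℝ) ^ ((1 : ℝ) / (m : ℝ)) - (1.5 : ℝ) ^ ((1 : ℝ) / (m : ℝ))) ^ m) :
    ∃ (r : ℕ) (a : ℕ), r.Prime ∧ 0 < a ∧
      2 * n < 2 * r ∧ 2 * r < 3 * n ∧ 3 * n < 2 * a ^ m ∧ 2 * a ^ m < 4 * n := by
  set δ := (2 : ℝ) ^ ((1 : ℝ) / m) - (1.5 : ℝ) ^ ((1 : ℝ) / m)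
  have hδ : 0 < δ ^ m :=
    pow_pos (sub_pos.2 (rpow_lt_rpow (by norm_num) (by norm_num) (by positivity))) m
  have hδ' : δ ^ m ≤ 0.5 :=
    (PrimeBetween.rpow_one_div_sub_rpow_one_div_pow_le hm.ne' (a := 1.5) (b := 2) (by norm_num)
      (by norm_num)).trans (by norm_num)
  have hnδ : 14.4 < n * δ ^ m := by rwa [gt_iff_lt, div_lt_iff₀ hδ] at h
  have hn : 29 ≤ n := by
    have : (28 : ℝ) < n := by nlinarith
    exact_mod_cast this
  obtain ⟨r, hr, hnr, hrn⟩ := PrimeBetween.exists_prime_lt_and_two_mul_lt_three_mul hn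
  obtain ⟨a, ha_lo, ha_hi⟩ := PrimeBetween.exists_nat_pow_mem_Ioo hm.ne' (α := 1.5) (β := 2)
    (x := n) (by norm_num) (by norm_num) (by positivity) (show (1 : ℝ) < n * δ ^ m by linarith)
  have h3n : 3 * n < 2 * a ^ m := by exact_mod_cast (by linarith : (3 * n : ℝ) < 2 * a ^ m)
  have h4n : 2 * a ^ m < 4 * n := by exact_mod_cast (by linarith : (2 * a ^ m : ℝ) < 4 * n)
  refine ⟨r, a, hr, Nat.pos_of_ne_zero ?_, by omega, hrn, h3n, h4n⟩
  rintro rfl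
  simp [hm.ne'] at h3n

theorem exists_prime_and_pow (m : ℕ) (hm : 0 < m) (n : ℕ) (hn : 0 < n)
    (h : (n : ℝ) > 14.4 / ((2 : ℝ) ^ ((1 : ℝ) / (m : ℝ)) - (1.5 : ℝ) ^ ((1 : ℝ) / (m : ℝ))) ^ m) :
    ∃ (r : ℕ) (a : ℕ), r.Prime ∧ 0 < a ∧
      2 * n < 2 * r ∧ 2 * r < 3 * n ∧ 3 * n < 2 * a ^ m ∧ 2 * a ^ m < 4 * n :=
  exists_prime_and_pow_general m hm n h
end
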